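/- arXiv:2311.11110 — 4 statements merged into one kernel-verified Lean document; each statement's English description precedes it below -/
import Mathlib

section
/- For every positive integer $n$ and real number $x$, $n x^{n-1} = \sum_{j=1}^{n} \binom{n}{j} (x-j)^{n-j} j^{j-1}$. -/
open Finset Polynomial fwdDiff

private lemma fd_pow_eq_zero : ∀ k m : ℕ, k < m →
    (Δ_[(1:ℕ)])^[m] (fun j : ℕ ↦ (j : ℝ) ^ k) = 0 := by
  intro k
  induction k using Nat.strong_induction_on with
  | _ k ih =>
    intro m hm
    obtain ⟨m', rfl⟩ : ∃ m', m = m' + 1 := ⟨m - 1, by omega⟩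
    rw [Function.iterate_succ_apply]
    have hΔ : Δ_[(1:ℕ)] (fun j : ℕ ↦ (j : ℝ) ^ k)
        = ∑ i ∈ range k, (k.choose i : ℝ) • (fun j : ℕ ↦ (j : ℝ) ^ i) := by
      funext j
      simp only [fwdDiff, Finset.sum_apply, Pi.smul_apply, smul_eq_mul]
      have := add_pow (j : ℝ) 1 k
      simp only [one_pow, mul_one] at this
      rw [Nat.cast_add, Nat.cast_one, this, Finset.sum_range_succ]
      simp [mul_comm]
    rw [hΔ, fwdDiff_iter_finset_sum]
    refine Finset.sum_eq_zero fun i hi ↦ ?_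
    rw [fwdDiff_iter_const_smul, ih i (Finset.mem_range.mp hi)
      m' (lt_of_lt_of_le (Finset.mem_range.mp hi) (Nat.lt_succ_iff.mp hm)), smul_zero]

private lemma alt_sum_eq_zero (k m : ℕ) (h : k < m) :
    ∑ j ∈ range (m + 1), (-1 : ℝ) ^ (m - j) * (m.choose j : ℝ) * (j : ℝ) ^ k = 0 := by
  have := fwdDiff_iter_eq_sum_shift (1 : ℕ) (fun j : ℕ ↦ (j : ℝ) ^ k) m 0
  rw [fd_pow_eq_zero k m h] at this
  simp only [Pi.zero_apply, zero_add, smul_eq_mul, zsmul_eq_mul] at this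
  conv_rhs => rw [this]
  exact Finset.sum_congr rfl fun j _ ↦ by push_cast; ring

noncomputable def abelP (n : ℕ) : Polynomial ℝ :=
  ∑ j ∈ Finset.Icc 1 n,
    Polynomial.C ((n.choose j : ℝ) * (j : ℝ) ^ (j - 1)) * (X - C (j : ℝ)) ^ (n - j)

private lemma abelP_eval_zero (n : ℕ) (hn : 2 ≤ n) : (abelP n).eval 0 = 0 := by
  have key : (abelP n).eval 0
      = ∑ j ∈ range (n + 1), (-1 : ℝ) ^ (n - j) * (n.choose j : ℝ) * (j : ℝ) ^ (n - 1) := by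
    have hins : range (n + 1) = insert 0 (Finset.Icc 1 n) := by
      ext a; simp only [Finset.mem_range, Finset.mem_insert, Finset.mem_Icc]; omega
    rw [hins, Finset.sum_insert (by simp)]
    have h0 : (-1 : ℝ) ^ (n - 0) * (n.choose 0 : ℝ) * ((0:ℕ) : ℝ) ^ (n - 1) = 0 := by
      rw [Nat.cast_zero, zero_pow (by omega : n - 1 ≠ 0)]; ring
    rw [h0, zero_add, abelP, eval_finset_sum]
    refine Finset.sum_congr rfl fun j hj ↦ ?_
    simp only [Finset.mem_Icc] at hj
    simp only [eval_mul, eval_pow, eval_sub, eval_X, eval_C, eval_zero, zero_sub]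
    rw [neg_pow]
    have hexp : (j : ℝ) ^ (j - 1) * ((j : ℝ) ^ (n - j)) = (j : ℝ) ^ (n - 1) := by
      rw [← pow_add]; congr 1; omega
    linear_combination ((-1:ℝ)^(n-j) * (n.choose j : ℝ)) * hexp
  rw [key, alt_sum_eq_zero (n-1) n (by omega)]

private lemma abelP_eq (n : ℕ) (hn : 1 ≤ n) : abelP n = C (n : ℝ) * X ^ (n - 1) := by
  induction n with
  | zero => omega
  | succ n ih =>
    rcases Nat.eq_or_lt_of_le hn with h1 | h1
    · have : n = 0 := by omega
      subst this
      simp [abelP]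
    · have hn1 : 1 ≤ n := by omega
      have hder : derivative (abelP (n+1)) = derivative (C ((n+1 : ℕ) : ℝ) * X ^ n) := by
        rw [abelP, derivative_sum]
        have hterm : ∀ j ∈ Finset.Icc 1 (n+1),
            derivative (C (((n+1).choose j : ℝ) * (j : ℝ) ^ (j - 1)) * (X - C (j : ℝ)) ^ (n + 1 - j))
            = C (((n+1 : ℕ)) : ℝ) *
              (C ((n.choose j : ℝ) * (j : ℝ) ^ (j - 1)) * (X - C (j : ℝ)) ^ (n - j)) := by
          intro j hj
          simp only [Finset.mem_Icc] at hj
          rw [derivative_C_mul, derivative_pow, derivative_sub, derivative_X, derivative_C,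
            sub_zero, mul_one]
          have hch : ((n + 1 - j : ℕ) : ℝ) * (((n+1).choose j : ℝ)) =
              ((n+1 : ℕ) : ℝ) * ((n.choose j : ℝ)) := by
            rw [← Nat.cast_mul, ← Nat.cast_mul, mul_comm ((n:ℕ)+1-j) _,
              ← Nat.choose_mul_succ_eq n j, mul_comm]
          rcases Nat.lt_or_ge j (n+1) with hj2 | hj2
          · have hpow : n + 1 - j - 1 = n - j := by omega
            rw [hpow]
            have hsc : ((n+1).choose j : ℝ) * (j : ℝ) ^ (j - 1) * ((n + 1 - j : ℕ) : ℝ)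
                = ((n+1 : ℕ) : ℝ) * ((n.choose j : ℝ) * (j : ℝ) ^ (j - 1)) := by
              linear_combination ((j : ℝ) ^ (j - 1)) * hch
            have hC : C (((n+1).choose j : ℝ)) * C ((j : ℝ) ^ (j - 1)) * C (((n + 1 - j : ℕ)) : ℝ)
                = C (((n+1 : ℕ)) : ℝ) * (C ((n.choose j : ℝ)) * C ((j : ℝ) ^ (j - 1))) := by
              rw [← C_mul, ← C_mul, ← C_mul, ← C_mul, hsc]
            rw [C_mul, C_mul]
            linear_combination ((X - C (j:ℝ)) ^ (n - j)) * hC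
          · have hj3 : j = n + 1 := by omega
            subst hj3
            simp [Nat.choose_succ_self]
        rw [Finset.sum_congr rfl hterm, ← Finset.mul_sum]
        have hIcc : ∑ j ∈ Finset.Icc 1 (n+1),
            C ((n.choose j : ℝ) * (j : ℝ) ^ (j - 1)) * (X - C (j : ℝ)) ^ (n - j) = abelP n := by
          rw [abelP, Finset.sum_Icc_succ_top (by omega : 1 ≤ n + 1)]
          simp [Nat.choose_succ_self]
        rw [hIcc, ih hn1, derivative_C_mul, derivative_X_pow]
      have hsub : derivative (abelP (n+1) - C ((n+1 : ℕ) : ℝ) * X ^ n) = 0 := by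
        rw [derivative_sub, hder, sub_self]
      have hc := eq_C_of_derivative_eq_zero hsub
      have h0 : (abelP (n+1) - C ((n+1 : ℕ) : ℝ) * X ^ n).coeff 0 = 0 := by
        rw [Polynomial.coeff_zero_eq_eval_zero, eval_sub, abelP_eval_zero (n+1) (by omega)]
        simp [zero_pow (by omega : n ≠ 0)]
      rw [h0, map_zero, sub_eq_zero] at hc
      simpa using hc

/-- Abel-type identity: for every positive integer `n` and real `x`,
`n * x^(n-1) = ∑_{j=1}^{n} (n choose j) * (x-j)^(n-j) * j^(j-1)`. -/
theorem abel_identity_one (n : ℕ) (hn : 0 < n) (x : ℝ) :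
    (n : ℝ) * x ^ (n - 1) =
      ∑ j ∈ Finset.Icc 1 n,
        (n.choose j : ℝ) * (x - (j : ℝ)) ^ (n - j) * (j : ℝ) ^ (j - 1) := by
  have h := congrArg (Polynomial.eval x) (abelP_eq n hn)
  rw [abelP, eval_finset_sum] at h
  simp only [eval_mul, eval_pow, eval_sub, eval_X, eval_C] at h
  rw [← h]
  exact Finset.sum_congr rfl fun j _ ↦ by ring
end

section
/- For every integer $n \geq 1$ and real number $x$, $\frac{n(n-1)}{2} x^{n-2} = \sum_{j=1}^{n} \binom{n}{j} (x-j)^{n-j} (j-1) j^{j-2}$. -/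
open Finset

-- Lemma A: m-th finite difference of j^k vanishes for k < m
lemma lemA : ∀ m k : ℕ, k < m →
    ∑ j ∈ range (m+1), (-1:ℝ)^j * (m.choose j : ℝ) * (j:ℝ)^k = 0 := by
  intro m
  induction m with
  | zero => intro k hk; omega
  | succ m IH =>
    intro k hk
    match k with
    | 0 =>
      simp only [pow_zero, mul_one]
      have := Int.alternating_sum_range_choose_of_ne (n := m+1) (by omega)
      have := congrArg (fun z : ℤ => (z : ℝ)) this
      push_cast at this
      simpa using this
    | k+1 =>
      rw [Finset.sum_range_succ']
      simp only [Nat.cast_zero, ne_eq]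
      rw [zero_pow (by omega), mul_zero, add_zero]
      have key : ∀ i ∈ range (m+1), (-1:ℝ)^(i+1) * ((m+1).choose (i+1) : ℝ) * ((i:ℝ)+1)^(k+1)
          = (-(m+1) : ℝ) * ((-1:ℝ)^i * (m.choose i : ℝ) * ((i:ℝ)+1)^k) := by
        intro i _
        have h1 : ((m+1).choose (i+1) : ℝ) * ((i:ℝ)+1) = ((m+1):ℝ) * (m.choose i : ℝ) := by
          have := Nat.add_one_mul_choose_eq m i
          have := congrArg (fun z : ℕ => (z : ℝ)) this
          push_cast at this
          linarith [this]
        calc (-1:ℝ)^(i+1) * ((m+1).choose (i+1) : ℝ) * ((i:ℝ)+1)^(k+1)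
            = (-1) * (-1:ℝ)^i * ((((m+1).choose (i+1) : ℝ)) * ((i:ℝ)+1)) * ((i:ℝ)+1)^k := by
              ring
          _ = (-(m+1) : ℝ) * ((-1:ℝ)^i * (m.choose i : ℝ) * ((i:ℝ)+1)^k) := by
              rw [h1]; ring
      calc ∑ i ∈ range (m+1), (-1:ℝ)^(i+1) * ((m+1).choose (i+1) : ℝ) * ((i+1:ℕ):ℝ)^(k+1)
          = ∑ i ∈ range (m+1), (-(m+1):ℝ) * ((-1:ℝ)^i * (m.choose i : ℝ) * ((i:ℝ)+1)^k) := by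
            apply Finset.sum_congr rfl
            intro i hi
            push_cast
            exact key i hi
        _ = (-(m+1):ℝ) * ∑ i ∈ range (m+1), ((-1:ℝ)^i * (m.choose i : ℝ) * ((i:ℝ)+1)^k) := by
            rw [Finset.mul_sum]
        _ = 0 := by
            rw [mul_eq_zero]; right
            have expand : ∀ i : ℕ, ((i:ℝ)+1)^k = ∑ t ∈ range (k+1), (i:ℝ)^t * (k.choose t : ℝ) := by
              intro i
              rw [add_pow]
              exact Finset.sum_congr rfl (by intro t _; rw [one_pow, mul_one])
            calc ∑ i ∈ range (m+1), ((-1:ℝ)^i * (m.choose i : ℝ) * ((i:ℝ)+1)^k)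
                = ∑ t ∈ range (k+1), (k.choose t : ℝ) *
                    ∑ i ∈ range (m+1), (-1:ℝ)^i * (m.choose i : ℝ) * (i:ℝ)^t := by
                  simp_rw [expand, Finset.mul_sum]
                  rw [Finset.sum_comm]
                  apply Finset.sum_congr rfl
                  intro t _
                  apply Finset.sum_congr rfl
                  intro i _
                  ring
              _ = 0 := by
                  apply Finset.sum_eq_zero
                  intro t ht
                  rw [IH t (by simp at ht; omega), mul_zero]

lemma lemB (m : ℕ) (hm : 2 ≤ m) :
    ∑ j ∈ Finset.Icc 1 m, (-1:ℝ)^(m-j) * (m.choose j : ℝ) * ((j:ℝ)-1) * (j:ℝ)^(m-2)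
      = if m = 2 then 1 else 0 := by
  have hins : Finset.range (m+1) = insert 0 (Finset.Icc 1 m) := by
    ext a; simp; omega
  have h0 : (0:ℕ) ∉ Finset.Icc 1 m := by simp
  set F : ℕ → ℝ := fun j => (-1:ℝ)^m * ((-1)^j * (m.choose j : ℝ) * (j:ℝ)^(m-1))
      - (-1:ℝ)^m * ((-1)^j * (m.choose j : ℝ) * (j:ℝ)^(m-2)) with hF
  have hsum : ∑ j ∈ Finset.range (m+1), F j = 0 := by
    rw [Finset.sum_sub_distrib, ← Finset.mul_sum, ← Finset.mul_sum,
      lemA m (m-1) (by omega), lemA m (m-2) (by omega)]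
    ring
  have hIcc : ∑ j ∈ Finset.Icc 1 m, F j = - F 0 := by
    rw [hins, Finset.sum_insert h0] at hsum; linarith
  have hpt : ∀ j ∈ Finset.Icc 1 m,
      (-1:ℝ)^(m-j) * (m.choose j : ℝ) * ((j:ℝ)-1) * (j:ℝ)^(m-2) = F j := by
    intro j hj
    simp only [Finset.mem_Icc] at hj
    have hsign : (-1:ℝ)^(m-j) = (-1)^m * (-1)^j := by
      have h : m + j = (m - j) + 2*j := by omega
      have h2 : (-1:ℝ)^(m+j) = (-1)^(m-j) := by
        rw [h, pow_add, pow_mul]; norm_num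
      rw [← h2, pow_add]
    have hpow : (j:ℝ)^(m-1) = (j:ℝ) * (j:ℝ)^(m-2) := by
      rw [show m-1 = (m-2)+1 by omega, pow_succ']
    rw [hsign, hF]
    simp only
    rw [hpow]
    ring
  rw [Finset.sum_congr rfl hpt, hIcc, hF]
  simp only [pow_zero, Nat.cast_zero, Nat.choose_zero_right, Nat.cast_one]
  rcases eq_or_ne m 2 with h2 | h2
  · subst h2; norm_num
  · rw [if_neg h2, zero_pow (by omega), zero_pow (by omega)]
    ring

lemma main : ∀ n : ℕ, 1 ≤ n → ∀ x : ℝ,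
    (n : ℝ) * ((n : ℝ) - 1) / 2 * x ^ (n - 2) =
      ∑ j ∈ Finset.Icc 1 n,
        (n.choose j : ℝ) * (x - (j : ℝ)) ^ (n - j) * ((j : ℝ) - 1) *
          ((j : ℝ) ^ (j - 1) / (j : ℝ)) := by
  intro n hn
  induction n, hn using Nat.le_induction with
  | base => intro x; norm_num
  | succ n hn IH =>
    intro x
    set a : ℕ → ℝ := fun j => ((j:ℝ) - 1) * ((j:ℝ)^(j-1)/(j:ℝ)) with ha
    set L : ℝ → ℝ := fun y => ((n+1:ℕ) : ℝ) * (((n+1:ℕ):ℝ) - 1) / 2 * y ^ (n+1-2) with hL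
    set S : ℝ → ℝ := fun y => ∑ j ∈ Finset.Icc 1 (n+1),
        ((n+1).choose j : ℝ) * (y - (j:ℝ))^(n+1-j) * ((j:ℝ)-1) * ((j:ℝ)^(j-1)/(j:ℝ)) with hS
    set g : ℝ → ℝ := fun y => L y - S y with hg
    have hderiv : ∀ y : ℝ, HasDerivAt g 0 y := by
      intro y
      have hdL : HasDerivAt L (((n+1:ℕ):ℝ) * (((n+1:ℕ):ℝ) - 1) / 2 * (((n-1:ℕ):ℝ) * y^(n-1-1))) y := by
        have := (hasDerivAt_pow (n-1) y).const_mul (((n+1:ℕ) : ℝ) * (((n+1:ℕ):ℝ) - 1) / 2)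
        convert this using 2
        all_goals rfl
      have hdS : HasDerivAt S (∑ j ∈ Finset.Icc 1 (n+1),
          ((n+1).choose j : ℝ) * ((((n+1-j:ℕ):ℝ) * (y - (j:ℝ))^(n+1-j-1)) * 1) * a j) y := by
        apply HasDerivAt.fun_sum
        intro j hj
        have h1 : HasDerivAt (fun y : ℝ => (y - (j:ℝ))^(n+1-j))
            (((n+1-j:ℕ):ℝ) * (y - (j:ℝ))^(n+1-j-1) * 1) y :=
          ((hasDerivAt_id y).sub_const (j:ℝ)).pow (n+1-j)
        have h2 := (h1.const_mul (((n+1).choose j : ℝ))).mul_const (a j)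
        exact h2.congr_of_eventuallyEq (Filter.Eventually.of_forall fun z => by beta_reduce; rw [ha]; ring)
      have key : (((n+1:ℕ):ℝ) * (((n+1:ℕ):ℝ) - 1) / 2 * (((n-1:ℕ):ℝ) * y^(n-1-1)))
          = (∑ j ∈ Finset.Icc 1 (n+1),
            ((n+1).choose j : ℝ) * ((((n+1-j:ℕ):ℝ) * (y - (j:ℝ))^(n+1-j-1)) * 1) * a j) := by
        have step1 : ∀ j ∈ Finset.Icc 1 (n+1),
            ((n+1).choose j : ℝ) * ((((n+1-j:ℕ):ℝ) * (y - (j:ℝ))^(n+1-j-1)) * 1) * a j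
            = ((n:ℝ)+1) * ((n.choose j : ℝ) * (y - (j:ℝ))^(n-j) * ((j:ℝ)-1) * ((j:ℝ)^(j-1)/(j:ℝ))) := by
          intro j hj
          simp only [Finset.mem_Icc] at hj
          have hc := congrArg (fun z : ℕ => (z : ℝ)) (Nat.choose_mul_succ_eq n j)
          push_cast [Nat.cast_mul] at hc
          have he : n+1-j-1 = n-j := by omega
          rw [he]
          have : ((n+1).choose j : ℝ) * ((n+1-j:ℕ):ℝ) = ((n:ℝ)+1) * (n.choose j : ℝ) := by
            rw [← hc]; ring
          calc ((n+1).choose j : ℝ) * ((((n+1-j:ℕ):ℝ) * (y - (j:ℝ))^(n-j)) * 1) * a j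
              = (((n+1).choose j : ℝ) * ((n+1-j:ℕ):ℝ)) * (y - (j:ℝ))^(n-j) * a j := by ring
            _ = ((n:ℝ)+1) * ((n.choose j : ℝ) * (y - (j:ℝ))^(n-j) * ((j:ℝ)-1) * ((j:ℝ)^(j-1)/(j:ℝ))) := by
                rw [this, ha]; ring
        rw [Finset.sum_congr rfl step1, ← Finset.mul_sum]
        rw [Finset.sum_Icc_succ_top (by omega)]
        rw [Nat.choose_succ_self, Nat.cast_zero]
        rw [← IH y]
        push_cast
        have h1 : ((n-1:ℕ):ℝ) = (n:ℝ) - 1 := by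
          have : (1:ℕ) ≤ n := hn
          push_cast [Nat.cast_sub this]
          ring
        rw [h1, show n-1-1 = n-2 by omega]
        ring
      have := hdL.sub hdS
      rw [hg]
      exact this.congr_deriv (by rw [key]; ring)
    have hconst : g x = g 0 :=
      is_const_of_deriv_eq_zero (fun y => (hderiv y).differentiableAt)
        (fun y => (hderiv y).deriv) x 0
    have hzero : g 0 = 0 := by
      rw [hg, hL, hS]
      simp only [sub_eq_zero]
      have step : ∀ j ∈ Finset.Icc 1 (n+1),
          ((n+1).choose j : ℝ) * ((0:ℝ) - (j:ℝ))^(n+1-j) * ((j:ℝ)-1) * ((j:ℝ)^(j-1)/(j:ℝ))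
          = (-1:ℝ)^(n+1-j) * ((n+1).choose j : ℝ) * ((j:ℝ)-1) * (j:ℝ)^(n+1-2) := by
        intro j hj
        simp only [Finset.mem_Icc] at hj
        have hj0 : (j:ℝ) ≠ 0 := Nat.cast_ne_zero.mpr (by omega)
        have hneg : ((0:ℝ) - (j:ℝ))^(n+1-j) = (-1:ℝ)^(n+1-j) * (j:ℝ)^(n+1-j) := by
          rw [zero_sub, neg_pow]
        have hpow : (j:ℝ)^(n+1-j) * (j:ℝ)^(j-1) = (j:ℝ)^n := by
          rw [← pow_add]
          congr 1
          omega
        have hpow2 : (j:ℝ)^n / (j:ℝ) = (j:ℝ)^(n-1) := by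
          rw [show n = (n-1)+1 by omega, pow_succ]
          field_simp
          rw [Nat.add_sub_cancel]
        calc ((n+1).choose j : ℝ) * ((0:ℝ) - (j:ℝ))^(n+1-j) * ((j:ℝ)-1) * ((j:ℝ)^(j-1)/(j:ℝ))
            = (-1:ℝ)^(n+1-j) * ((n+1).choose j : ℝ) * ((j:ℝ)-1) *
              ((j:ℝ)^(n+1-j) * (j:ℝ)^(j-1) / (j:ℝ)) := by rw [hneg]; ring
          _ = (-1:ℝ)^(n+1-j) * ((n+1).choose j : ℝ) * ((j:ℝ)-1) * (j:ℝ)^(n-1) := by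
              rw [hpow, hpow2]
          _ = (-1:ℝ)^(n+1-j) * ((n+1).choose j : ℝ) * ((j:ℝ)-1) * (j:ℝ)^(n+1-2) := by
              congr 2
      rw [Finset.sum_congr rfl step]
      have := lemB (n+1) (by omega)
      rw [this]
      rcases eq_or_ne n 1 with h1 | h1
      · subst h1; norm_num
      · rw [if_neg (by omega), zero_pow (by omega)]
        push_cast; ring
    have := hconst.trans hzero
    rw [hg, hL, hS, sub_eq_zero] at this
    convert this using 2



/-- Abel-type identity: for every integer `n ≥ 1` and real `x`,
`n(n-1)/2 * x^(n-2) = ∑_{j=1}^{n} (n choose j) * (x-j)^(n-j) * (j-1) * j^(j-2)`,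
where for `j = 1` the factor `(j-1) * j^(j-2)` is interpreted as `0`
(equivalently `j^(j-2)` is `j^(j-1)/j`). -/
theorem abel_identity_two (n : ℕ) (hn : 1 ≤ n) (x : ℝ) :
    (n : ℝ) * ((n : ℝ) - 1) / 2 * x ^ (n - 2) =
      ∑ j ∈ Finset.Icc 1 n,
        (n.choose j : ℝ) * (x - (j : ℝ)) ^ (n - j) * ((j : ℝ) - 1) *
          ((j : ℝ) ^ (j - 1) / (j : ℝ)) := by
  exact main n hn x
end

section
/- For every positive integer $n$, $\frac{1}{2}(n-1) n^{n} = \sum_{j=1}^{n} \binom{n}{j} (n-j)^{n-j+1} j^{j-2}$, where the sum is taken over rationals (each term $\binom{n}{j}(n-j)^{n-j+1} j^{j-2}$ with $j^{j-2}$ meaning $j^{j-1}/j$). -/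
open Finset fwdDiff

/-- The `m`-th forward difference of `x ↦ x^e` vanishes when `e < m`. -/
lemma fwdDiff_pow_eq_zero : ∀ e : ℕ, ∀ m : ℕ, e < m →
    (Δ_[(1:ℕ)])^[m] (fun x : ℕ => (x:ℚ)^e) = 0 := by
  intro e
  induction e using Nat.strong_induction_on with
  | _ e IH =>
    intro m hm
    obtain ⟨m', rfl⟩ : ∃ m', m = m' + 1 := ⟨m - 1, by omega⟩
    rw [Function.iterate_succ_apply]
    have hΔ : Δ_[(1:ℕ)] (fun x : ℕ => (x:ℚ)^e)
        = ∑ i ∈ range e, (e.choose i : ℚ) • (fun x : ℕ => (x:ℚ)^i) := by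
      funext x
      simp only [fwdDiff, Finset.sum_apply, Pi.smul_apply, smul_eq_mul]
      push_cast
      rw [add_pow, Finset.sum_range_succ]
      simp only [Nat.choose_self, Nat.cast_one, mul_one, one_pow, Nat.sub_self, pow_zero,
        add_sub_cancel_right]
      exact Finset.sum_congr rfl fun k _ => by ring
    rw [hΔ, fwdDiff_iter_finset_sum]
    refine Finset.sum_eq_zero fun i hi => ?_
    have hie : i < e := Finset.mem_range.mp hi
    rw [fwdDiff_iter_const_smul, IH i hie m' (by omega), smul_zero]

/-- Alternating binomial sums kill monomials of low degree. -/
lemma alt_sum_pow (m e : ℕ) (h : e < m) :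
    ∑ k ∈ range (m+1), (-1:ℚ)^(m-k) * (m.choose k : ℚ) * (k:ℚ)^e = 0 := by
  have h0 := fwdDiff_iter_eq_sum_shift (1:ℕ) (fun x : ℕ => (x:ℚ)^e) m 0
  calc ∑ k ∈ range (m+1), (-1:ℚ)^(m-k) * (m.choose k : ℚ) * (k:ℚ)^e
      = ∑ k ∈ range (m+1),
          ((-1:ℤ)^(m-k) * (m.choose k) : ℤ) • ((0 + k • (1:ℕ) : ℕ):ℚ)^e := by
        refine Finset.sum_congr rfl fun k _ => ?_
        simp only [smul_eq_mul, mul_one, zero_add, zsmul_eq_mul]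
        push_cast
        ring
    _ = (Δ_[(1:ℕ)])^[m] (fun x : ℕ => (x:ℚ)^e) 0 := h0.symm
    _ = 0 := by rw [fwdDiff_pow_eq_zero e m h]; rfl

/-- Summand after the binomial expansion and reindexing. -/
def abelF (n j i : ℕ) : ℚ :=
  (n.choose j : ℚ) * ((n-j).choose i : ℚ) * (-1:ℚ)^i * (j:ℚ)^i * (n:ℚ)^(n-j-i) *
    ((n:ℚ) - (j:ℚ)) * ((j:ℚ)^(j-1)/(j:ℚ))

/-- The inner alternating sum. -/
def GAux (n m : ℕ) : ℚ :=
  ∑ j ∈ Finset.Icc 1 m, (-1:ℚ)^(m-j) * (m.choose j : ℚ) *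
    (((n:ℚ) - (j:ℚ)) * ((j:ℚ)^(m-1)/(j:ℚ)))

lemma GAux_one (n : ℕ) : GAux n 1 = (n:ℚ) - 1 := by
  simp [GAux, Finset.Icc_self]

lemma GAux_two (n : ℕ) : GAux n 2 = -(n:ℚ) := by
  rw [GAux, Finset.sum_Icc_succ_top (by norm_num), Finset.Icc_self, Finset.sum_singleton]
  norm_num
  ring

lemma GAux_big (n m : ℕ) (hm : 3 ≤ m) : GAux n m = 0 := by
  have h1 := alt_sum_pow m (m-2) (by omega)
  have h2 := alt_sum_pow m (m-1) (by omega)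
  have hins : insert 0 (Icc 1 m) = range (m+1) := by
    ext x
    simp only [Finset.mem_insert, Finset.mem_Icc, Finset.mem_range]
    omega
  have hsum : ∑ j ∈ range (m+1),
      ((n:ℚ) * ((-1:ℚ)^(m-j) * (m.choose j : ℚ) * (j:ℚ)^(m-2))
        - ((-1:ℚ)^(m-j) * (m.choose j : ℚ) * (j:ℚ)^(m-1))) = 0 := by
    rw [Finset.sum_sub_distrib, ← Finset.mul_sum, h1, h2]
    ring
  rw [← hins, Finset.sum_insert (by simp)] at hsum
  have hz2 : (0:ℚ)^(m-2) = 0 := zero_pow (by omega)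
  have hz1 : (0:ℚ)^(m-1) = 0 := zero_pow (by omega)
  rw [Nat.cast_zero, hz2, hz1] at hsum
  simp only [mul_zero, sub_zero, zero_sub, neg_zero, zero_add, sub_self] at hsum
  rw [GAux, ← hsum]
  refine Finset.sum_congr rfl fun j hj => ?_
  obtain ⟨hj1, hjm⟩ := Finset.mem_Icc.mp hj
  have hj0 : (j:ℚ) ≠ 0 := Nat.cast_ne_zero.mpr (by omega)
  have hp : (j:ℚ)^(m-1) = (j:ℚ)^(m-2) * j := by
    rw [← pow_succ]; congr 1; omega
  rw [hp]
  field_simp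

/-- For every positive integer `n`,
`(1/2)(n-1)n^n = ∑_{j=1}^{n} (n choose j) * (n-j)^(n-j+1) * j^(j-2)`
as rationals, where `j^(j-2)` means `j^(j-1)/j`. -/
theorem abel_corollary (n : ℕ) (hn : 0 < n) :
    (1 / 2 : ℚ) * ((n : ℚ) - 1) * (n : ℚ) ^ n =
      ∑ j ∈ Finset.Icc 1 n,
        (n.choose j : ℚ) * ((n : ℚ) - (j : ℚ)) ^ (n - j + 1) *
          ((j : ℚ) ^ (j - 1) / (j : ℚ)) := by
  rcases eq_or_lt_of_le (show 1 ≤ n from hn) with h1 | hn2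
  · -- n = 1
    rw [← h1]
    norm_num [Finset.Icc_self]
  have hn2 : 2 ≤ n := hn2
  have expand : ∀ j ∈ Icc 1 n,
      (n.choose j : ℚ) * ((n:ℚ) - (j:ℚ))^(n-j+1) * ((j:ℚ)^(j-1)/(j:ℚ))
        = ∑ i ∈ range (n-j+1), abelF n j i := by
    intro j hj
    rw [pow_succ, show ((n:ℚ) - (j:ℚ)) = (-(j:ℚ) + (n:ℚ)) from by ring, add_pow]
    rw [Finset.sum_mul, Finset.mul_sum, Finset.sum_mul]
    refine Finset.sum_congr rfl fun i hi => ?_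
    simp only [abelF]
    rw [neg_pow]
    ring
  have reindex : ∑ j ∈ Icc 1 n, ∑ i ∈ range (n-j+1), abelF n j i
      = ∑ m ∈ Icc 1 n, ∑ j ∈ Icc 1 m, abelF n j (m-j) := by
    rw [Finset.sum_sigma', Finset.sum_sigma']
    refine Finset.sum_nbij' (fun p => ⟨p.1 + p.2, p.1⟩) (fun p => ⟨p.2, p.1 - p.2⟩)
      ?_ ?_ ?_ ?_ ?_
    · rintro ⟨j, i⟩ hp
      simp only [Finset.mem_sigma, Finset.mem_Icc, Finset.mem_range] at hp ⊢
      omega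
    · rintro ⟨m, j⟩ hp
      simp only [Finset.mem_sigma, Finset.mem_Icc, Finset.mem_range] at hp ⊢
      omega
    · rintro ⟨j, i⟩ hp
      show (⟨j, j + i - j⟩ : (_ : ℕ) × ℕ) = ⟨j, i⟩
      rw [Nat.add_sub_cancel_left]
    · rintro ⟨m, j⟩ hp
      simp only [Finset.mem_sigma, Finset.mem_Icc, Finset.mem_range] at hp
      show (⟨j + (m - j), j⟩ : (_ : ℕ) × ℕ) = ⟨m, j⟩
      rw [Nat.add_sub_cancel' hp.2.2]
    · rintro ⟨j, i⟩ hp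
      simp only [Nat.add_sub_cancel_left]
  have step3 : ∀ m ∈ Icc 1 n, ∑ j ∈ Icc 1 m, abelF n j (m-j)
      = (n.choose m : ℚ) * (n:ℚ)^(n-m) * GAux n m := by
    intro m hm
    obtain ⟨hm1, hmn⟩ := Finset.mem_Icc.mp hm
    rw [GAux, Finset.mul_sum]
    refine Finset.sum_congr rfl fun j hj => ?_
    obtain ⟨hj1, hjm⟩ := Finset.mem_Icc.mp hj
    have hch : (n.choose j : ℚ) * ((n-j).choose (m-j) : ℚ)
        = (n.choose m : ℚ) * (m.choose j : ℚ) := by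
      exact_mod_cast congrArg (Nat.cast : ℕ → ℚ) (Nat.choose_mul (n := n) hjm).symm
    have hexp : n - j - (m - j) = n - m := by omega
    have hpow : (m - j) + (j - 1) = m - 1 := by omega
    simp only [abelF]
    rw [hexp, show m - 1 = (m-j) + (j-1) from hpow.symm, pow_add]
    linear_combination ((-1:ℚ)^(m-j) * (j:ℚ)^(m-j) * (n:ℚ)^(n-m) * ((n:ℚ) - (j:ℚ))
      * ((j:ℚ)^(j-1)/(j:ℚ))) * hch
  have step4 : ∑ m ∈ Icc 1 n, (n.choose m : ℚ) * (n:ℚ)^(n-m) * GAux n m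
      = ∑ m ∈ Icc 1 2, (n.choose m : ℚ) * (n:ℚ)^(n-m) * GAux n m := by
    symm
    apply Finset.sum_subset
    · intro x hx
      simp only [Finset.mem_Icc] at hx ⊢
      omega
    · intro x hx hx2
      simp only [Finset.mem_Icc] at hx hx2
      rw [GAux_big n x (by omega)]
      ring
  calc (1 / 2 : ℚ) * ((n : ℚ) - 1) * (n : ℚ) ^ n
      = ∑ m ∈ Icc 1 2, (n.choose m : ℚ) * (n:ℚ)^(n-m) * GAux n m := by
        rw [Finset.sum_Icc_succ_top (by norm_num), Finset.Icc_self, Finset.sum_singleton]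
        rw [GAux_one, GAux_two, Nat.choose_one_right, Nat.cast_choose_two]
        obtain ⟨k, rfl⟩ : ∃ k, n = k + 2 := ⟨n - 2, by omega⟩
        rw [show k + 2 - 1 = k + 1 from rfl, show k + 2 - 2 = k from rfl]
        push_cast
        ring
    _ = ∑ m ∈ Icc 1 n, (n.choose m : ℚ) * (n:ℚ)^(n-m) * GAux n m := step4.symm
    _ = ∑ m ∈ Icc 1 n, ∑ j ∈ Icc 1 m, abelF n j (m-j) := (Finset.sum_congr rfl step3).symm
    _ = ∑ j ∈ Icc 1 n, ∑ i ∈ range (n-j+1), abelF n j i := reindex.symm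
    _ = ∑ j ∈ Finset.Icc 1 n,
          (n.choose j : ℚ) * ((n : ℚ) - (j : ℚ)) ^ (n - j + 1) *
            ((j : ℚ) ^ (j - 1) / (j : ℚ)) := (Finset.sum_congr rfl expand).symm
end

section
/- Let $r \geq 1$, let $a_1, \dots, a_r$ be integers with each $a_i \geq 2$, set $\mu_A := 2 + \sum_{i=1}^r (a_i - 1)$, and suppose $\chi_A := 2 + \sum_{i=1}^r (1/a_i - 1) = 0$. Then for each index $i$, $\sum_{j=1}^{a_i - 1} \binom{\mu_A - 1}{j-1} \cdot \frac{(\mu_A - j)!}{(a_i - j)!\, \prod_{k \neq i} a_k!} \cdot \frac{a_i (a_i - j)}{j} \cdot (a_i - j)^{a_i - j} \prod_{k \neq i} a_k^{a_k} \cdot j^{j-2} = \frac{\mu_A!}{\prod_{k=1}^r a_k!} \prod_{k=1}^r a_k^{a_k} \cdot \frac{a_i (a_i - 1)}{2 \mu_A}$, as an identity of rational numbers. -/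
open Finset Nat

lemma inv_mono' (n m : ℕ) (h1 : 0 < m) (h2 : m ≤ n) : (n:ℚ)⁻¹ ≤ (m:ℚ)⁻¹ := by
  have h1' : (0:ℚ) < m := by exact_mod_cast h1
  have h2' : (m:ℚ) ≤ n := by exact_mod_cast h2
  exact inv_anti₀ h1' h2'

lemma bound6 (x y z : ℕ) (hx : 2 ≤ x) (hy : 2 ≤ y) (hz : 2 ≤ z)
    (h : (x:ℚ)⁻¹ + (y:ℚ)⁻¹ + (z:ℚ)⁻¹ = 1) : x ≤ 6 := by
  by_contra hc
  push_neg at hc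
  have hxi : (x:ℚ)⁻¹ ≤ ((7:ℕ):ℚ)⁻¹ := inv_mono' x 7 (by norm_num) hc
  have hyi : (y:ℚ)⁻¹ ≤ ((2:ℕ):ℚ)⁻¹ := inv_mono' y 2 (by norm_num) hy
  have hzi : (z:ℚ)⁻¹ ≤ ((2:ℕ):ℚ)⁻¹ := inv_mono' z 2 (by norm_num) hz
  norm_num at hxi hyi hzi
  rcases Nat.lt_or_ge y 3 with hy3 | hy3
  · interval_cases y
    rcases Nat.lt_or_ge z 3 with hz3 | hz3
    · interval_cases z
      have hx0 : (x:ℚ)⁻¹ = 0 := by push_cast at h ⊢; linarith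
      have hxp : (0:ℚ) < (x:ℚ)⁻¹ := inv_pos.mpr (by positivity)
      rw [hx0] at hxp; exact absurd hxp (by norm_num)
    · have hzi3 : (z:ℚ)⁻¹ ≤ ((3:ℕ):ℚ)⁻¹ := inv_mono' z 3 (by norm_num) hz3
      norm_num at hzi3
      push_cast at h; linarith
  · have hyi3 : (y:ℚ)⁻¹ ≤ ((3:ℕ):ℚ)⁻¹ := inv_mono' y 3 (by norm_num) hy3
    norm_num at hyi3
    linarith

lemma triples (x y z : ℕ) (hx : 2 ≤ x) (hy : 2 ≤ y) (hz : 2 ≤ z)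
    (h : (x:ℚ)⁻¹ + (y:ℚ)⁻¹ + (z:ℚ)⁻¹ = 1) :
    (x = 2 ∧ y = 3 ∧ z = 6) ∨ (x = 2 ∧ y = 6 ∧ z = 3) ∨ (x = 3 ∧ y = 2 ∧ z = 6) ∨
    (x = 3 ∧ y = 6 ∧ z = 2) ∨ (x = 6 ∧ y = 2 ∧ z = 3) ∨ (x = 6 ∧ y = 3 ∧ z = 2) ∨
    (x = 2 ∧ y = 4 ∧ z = 4) ∨ (x = 4 ∧ y = 2 ∧ z = 4) ∨ (x = 4 ∧ y = 4 ∧ z = 2) ∨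
    (x = 3 ∧ y = 3 ∧ z = 3) := by
  have bx := bound6 x y z hx hy hz h
  have by' := bound6 y x z hy hx hz (by linarith)
  have bz := bound6 z x y hz hx hy (by linarith)
  interval_cases x <;> interval_cases y <;> interval_cases z <;>
    first | decide | (norm_num at h)

lemma prod_erase0 (f : Fin 3 → ℚ) :
    ∏ k ∈ Finset.univ.erase (0 : Fin 3), f k = f 1 * f 2 := by
  rw [show (Finset.univ.erase (0 : Fin 3)) = {1, 2} from by decide]
  rw [Finset.prod_insert (by decide), Finset.prod_singleton]

lemma prod_erase1 (f : Fin 3 → ℚ) :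
    ∏ k ∈ Finset.univ.erase (1 : Fin 3), f k = f 0 * f 2 := by
  rw [show (Finset.univ.erase (1 : Fin 3)) = {0, 2} from by decide]
  rw [Finset.prod_insert (by decide), Finset.prod_singleton]

lemma prod_erase2 (f : Fin 3 → ℚ) :
    ∏ k ∈ Finset.univ.erase (2 : Fin 3), f k = f 0 * f 1 := by
  rw [show (Finset.univ.erase (2 : Fin 3)) = {0, 1} from by decide]
  rw [Finset.prod_insert (by decide), Finset.prod_singleton]

lemma finmk2 (h : 2 < 3) : (⟨2, h⟩ : Fin 3) = 2 := rfl

lemma icc11 : (Finset.Icc 1 1 : Finset ℕ) = {1} := by decide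
lemma icc12 : (Finset.Icc 1 2 : Finset ℕ) = {1, 2} := by decide
lemma icc13 : (Finset.Icc 1 3 : Finset ℕ) = {1, 2, 3} := by decide
lemma icc15 : (Finset.Icc 1 5 : Finset ℕ) = {1, 2, 3, 4, 5} := by decide

set_option maxHeartbeats 4000000 in
/-- Let `a_1, …, a_r ≥ 2` with `χ_A = 2 + ∑ (1/a_i - 1) = 0` and
`μ_A = 2 + ∑ (a_i - 1)`.  Then for each index `i`,
`∑_{j=1}^{a_i-1} C(μ_A-1, j-1) * (μ_A-j)!/((a_i-j)! ∏_{k≠i} a_k!) * (a_i(a_i-j)/j)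
  * (a_i-j)^(a_i-j) * ∏_{k≠i} a_k^{a_k} * j^(j-2)
  = μ_A!/∏ a_k! * ∏ a_k^{a_k} * (a_i(a_i-1)/(2 μ_A))`,
as rationals, where `j^(j-2)` means `j^(j-1)/j`. -/
theorem single_index_sum (r : ℕ) (hr : 1 ≤ r) (a : Fin r → ℕ) (ha : ∀ i, 2 ≤ a i)
    (hχ : (2 : ℚ) + ∑ i, ((a i : ℚ)⁻¹ - 1) = 0) (i : Fin r) :
    (∑ j ∈ Finset.Icc 1 (a i - 1),
      ((2 + ∑ k, (a k - 1) - 1).choose (j - 1) : ℚ) *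
        (((2 + ∑ k, (a k - 1) - j)! : ℚ) /
          (((a i - j)! : ℚ) * ∏ k ∈ Finset.univ.erase i, ((a k)! : ℚ))) *
        ((a i : ℚ) * ((a i : ℚ) - (j : ℚ)) / (j : ℚ)) *
        ((a i : ℚ) - (j : ℚ)) ^ (a i - j) *
        (∏ k ∈ Finset.univ.erase i, (a k : ℚ) ^ (a k)) *
        ((j : ℚ) ^ (j - 1) / (j : ℚ))) =
    (((2 + ∑ k, (a k - 1))! : ℚ) / ∏ k, ((a k)! : ℚ)) *
      (∏ k, (a k : ℚ) ^ (a k)) *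
      ((a i : ℚ) * ((a i : ℚ) - 1) / (2 * (2 + ∑ k, ((a k : ℚ) - 1)))) := by
  have hsum : ∑ k, (a k : ℚ)⁻¹ = (r : ℚ) - 2 := by
    have h1 : ∑ k, ((a k : ℚ)⁻¹ - 1) = (∑ k, (a k : ℚ)⁻¹) - r := by
      rw [Finset.sum_sub_distrib, Finset.sum_const, Finset.card_univ, Fintype.card_fin]
      simp
    rw [h1] at hχ; linarith
  have hub : ∀ k : Fin r, (a k : ℚ)⁻¹ ≤ ((2:ℕ):ℚ)⁻¹ := fun k =>
    inv_mono' (a k) 2 (by norm_num) (ha k)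
  have hle : (r : ℚ) - 2 ≤ r / 2 := by
    rw [← hsum]
    calc ∑ k, (a k : ℚ)⁻¹ ≤ ∑ _k : Fin r, ((2:ℕ):ℚ)⁻¹ :=
          Finset.sum_le_sum (fun k _ => hub k)
      _ = r / 2 := by
          rw [Finset.sum_const, Finset.card_univ, Fintype.card_fin]; push_cast; ring
  have hpos : (0 : ℚ) < ∑ k, (a k : ℚ)⁻¹ := by
    apply Finset.sum_pos _ ⟨⟨0, hr⟩, Finset.mem_univ _⟩
    intro k _
    have hk := ha k
    have : (0:ℚ) < a k := by positivity
    exact inv_pos.mpr this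
  have hr4 : r ≤ 4 := by
    have : (r : ℚ) ≤ 4 := by linarith
    exact_mod_cast this
  have hr3 : 3 ≤ r := by
    have : (2 : ℚ) < r := by rw [hsum] at hpos; linarith
    exact_mod_cast this
  interval_cases r
  · -- r = 3
    rw [Fin.sum_univ_three] at hsum
    norm_num at hsum
    rcases triples (a 0) (a 1) (a 2) (ha 0) (ha 1) (ha 2) hsum with
      ⟨h0, h1, h2⟩ | ⟨h0, h1, h2⟩ | ⟨h0, h1, h2⟩ | ⟨h0, h1, h2⟩ | ⟨h0, h1, h2⟩ |
      ⟨h0, h1, h2⟩ | ⟨h0, h1, h2⟩ | ⟨h0, h1, h2⟩ | ⟨h0, h1, h2⟩ | ⟨h0, h1, h2⟩ <;>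
    fin_cases i <;>
    simp only [Fin.mk_zero, Fin.mk_one, finmk2, Fin.sum_univ_three, Fin.prod_univ_three,
      Fin.isValue, prod_erase0, prod_erase1, prod_erase2, h0, h1, h2] <;>
    norm_num [icc11, icc12, icc13, icc15, Finset.sum_insert, Finset.mem_insert,
      Nat.factorial, Nat.choose]
  · -- r = 4
    have h2 : ∀ k : Fin 4, a k = 2 := by
      intro k
      by_contra hk
      have hk3 : 3 ≤ a k := by
        have := ha k; omega
      have hki : (a k : ℚ)⁻¹ ≤ ((3:ℕ):ℚ)⁻¹ := inv_mono' (a k) 3 (by norm_num) hk3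
      have hsum' : ∑ m, (a m : ℚ)⁻¹ < ∑ _m : Fin 4, ((2:ℕ):ℚ)⁻¹ := by
        refine Finset.sum_lt_sum (fun m _ => hub m) ⟨k, Finset.mem_univ k, ?_⟩
        have : ((3:ℕ):ℚ)⁻¹ < ((2:ℕ):ℚ)⁻¹ := by norm_num
        linarith
      rw [hsum] at hsum'
      rw [Finset.sum_const, Finset.card_univ, Fintype.card_fin] at hsum'
      norm_num at hsum'
    simp only [h2]
    have hcard : (Finset.univ.erase i).card = 3 := by
      rw [Finset.card_erase_of_mem (Finset.mem_univ i), Finset.card_univ, Fintype.card_fin]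
    simp only [Finset.prod_const, Finset.sum_const, Finset.card_univ, Fintype.card_fin, hcard,
      smul_eq_mul]
    norm_num [icc11, Nat.factorial, Nat.choose]
end
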